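/- arXiv:2001.10058 — 3 statements merged into one kernel-verified Lean document; each statement's English description precedes it below -/
import Mathlib

section
/- Let Ω ⊂ ℝ^d be bounded and measurable, f : ℝ^d → ℝ a C¹ function with compact support, θ : ℝ^d → ℝ^d a C¹ vector field with bounded derivative, and T_ρ(x) = x + ρθ(x). Then j(ρ) = ∫_{T_ρ(Ω)} f(x) dx is differentiable at ρ = 0 with j'(0) = ∫_Ω div(f·θ)(x) dx = ∫_Ω (∇f(x)·θ(x) + f(x) div θ(x)) dx. -/
/-!
For `|ρ| ‖Dθ‖ < 1` the map `T_ρ = id + ρ θ` is injective and `det DT_ρ = det (1 + ρ Dθ) > 0`, so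
the change of variables formula turns `j(ρ)` into `∫_Ω det (1 + ρ Dθ x) f (T_ρ x) dx`. The
`ρ`-derivative of this integrand is jointly continuous in `(ρ, x)`, hence bounded on
`[-1, 1] × closure Ω`, which allows differentiating under the integral sign; at `ρ = 0` the
derivative of `det (1 + ρ Dθ x)` is `tr Dθ x`.
-/

open MeasureTheory Metric Filter Function Topology

namespace ContinuousLinearMap

section Determinant

variable {𝕜 E : Type*} [NontriviallyNormedField 𝕜] [NormedAddCommGroup E] [NormedSpace 𝕜 E]
  [FiniteDimensional 𝕜 E]

theorem hasDerivAt_det_one_add_smul_zero (A : E →L[𝕜] E) :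
    HasDerivAt (fun t : 𝕜 => (1 + t • A).det) (LinearMap.trace 𝕜 E A) 0 := by
  let b := Module.finBasis 𝕜 E
  set M := LinearMap.toMatrix b b A
  set Q := (Matrix.det (1 + (Polynomial.X : Polynomial 𝕜) • M.map Polynomial.C)).divX.divX
  have hexpansion : (fun t : 𝕜 => (1 + t • A).det) =
      fun t => 1 + M.trace * t + Q.eval t * t ^ 2 := by
    funext t
    rw [← Matrix.det_one_add_smul, ContinuousLinearMap.det, ← LinearMap.det_toMatrix b]
    simp [M, map_add]
  rw [hexpansion, LinearMap.trace_eq_matrix_trace 𝕜 b]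
  exact ((((hasDerivAt_id' (0 : 𝕜)).const_mul M.trace).const_add 1).add
    ((Q.hasDerivAt 0).mul (hasDerivAt_pow 2 0))).congr_deriv (by simp [M])

variable [CompleteSpace 𝕜]

theorem contDiff_det {n : WithTop ℕ∞} : ContDiff 𝕜 n fun A : E →L[𝕜] E => A.det := by
  let b := Module.finBasis 𝕜 E
  have hleibniz : (fun A : E →L[𝕜] E => A.det) =
      fun A => ∑ σ : Equiv.Perm (Fin (Module.finrank 𝕜 E)),
        (Equiv.Perm.sign σ : 𝕜) * ∏ i, b.coord (σ i) (A (b i)) := by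
    funext A
    rw [ContinuousLinearMap.det, ← LinearMap.det_toMatrix b, Matrix.det_apply]
    simp [LinearMap.toMatrix_apply, Units.smul_def]
  rw [hleibniz]
  refine ContDiff.sum fun σ _ => contDiff_const.mul (contDiff_prod fun i _ => ?_)
  exact ((LinearMap.toContinuousLinearMap (b.coord (σ i))).comp (apply 𝕜 E (b i))).contDiff

theorem contDiff_det_one_add_smul {n : WithTop ℕ∞} :
    ContDiff 𝕜 n fun p : 𝕜 × (E →L[𝕜] E) => (1 + p.1 • p.2).det :=
  contDiff_det.comp (contDiff_const.add (contDiff_fst.smul contDiff_snd))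

theorem hasDerivAt_det_one_add_smul (A : E →L[𝕜] E) (ρ : 𝕜) :
    HasDerivAt (fun t : 𝕜 => (1 + t • A).det)
      (fderiv 𝕜 (fun p : 𝕜 × (E →L[𝕜] E) => (1 + p.1 • p.2).det) (ρ, A) (1, 0)) ρ := by
  have hΦ := ((contDiff_det_one_add_smul (n := 1)).differentiable one_ne_zero (ρ, A)).hasFDerivAt
  exact hΦ.comp_hasDerivAt ρ ((hasDerivAt_id ρ).prodMk (hasDerivAt_const ρ A))

theorem continuous_deriv_det_one_add_smul :
    Continuous fun p : 𝕜 × (E →L[𝕜] E) => deriv (fun t : 𝕜 => (1 + t • p.2).det) p.1 := by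
  simp only [fun p : 𝕜 × (E →L[𝕜] E) => (hasDerivAt_det_one_add_smul p.2 p.1).deriv]
  exact (contDiff_det_one_add_smul.continuous_fderiv_apply one_ne_zero).comp
    (continuous_id.prodMk continuous_const)

end Determinant

variable {E : Type*} [NormedAddCommGroup E] [NormedSpace ℝ E] [FiniteDimensional ℝ E]

theorem det_one_add_ne_zero_of_norm_lt_one {A : E →L[ℝ] E} (hA : ‖A‖ < 1) :
    (1 + A).det ≠ 0 := by
  have hunit : IsUnit (1 + A) := by
    simpa using isUnit_one_sub_of_norm_lt_one (x := -A) (by rwa [norm_neg])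
  exact (LinearMap.isUnit_det _ (hunit.map toLinearMapRingHom)).ne_zero

/-- The determinant cannot vanish along the path `t ↦ 1 + t • A`, `t ∈ [0, 1]`, which starts
at `det 1 = 1`. -/
theorem det_one_add_pos_of_norm_lt_one {A : E →L[ℝ] E} (hA : ‖A‖ < 1) :
    0 < (1 + A).det := by
  have hcont : Continuous fun t : ℝ => (1 + t • A).det :=
    continuous_det.comp (continuous_const.add (continuous_id.smul continuous_const))
  by_contra! hle
  obtain ⟨t, ht, hzero⟩ : ∃ t ∈ Set.Icc (0 : ℝ) 1, (1 + t • A).det = 0 :=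
    intermediate_value_Icc' zero_le_one hcont.continuousOn
      ⟨by simpa using hle, by simp [ContinuousLinearMap.det]⟩
  refine det_one_add_ne_zero_of_norm_lt_one ?_ hzero
  calc ‖t • A‖ = |t| * ‖A‖ := by rw [norm_smul, Real.norm_eq_abs]
    _ ≤ 1 * ‖A‖ := by gcongr; exact abs_le.mpr ⟨by linarith [ht.1], ht.2⟩
    _ < 1 := by rwa [one_mul]

end ContinuousLinearMap

theorem setIntegral_image_add_eq_setIntegral_det_smul {E F : Type*} [NormedAddCommGroup E]
    [NormedSpace ℝ E] [FiniteDimensional ℝ E] [MeasurableSpace E] [BorelSpace E]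
    (μ : Measure E) [μ.IsAddHaarMeasure] [NormedAddCommGroup F] [NormedSpace ℝ F]
    {s : Set E} (hs : MeasurableSet s) {g : E → E} {g' : E → E →L[ℝ] E}
    (hg : ∀ x, HasFDerivAt g (g' x) x) {r : ℝ} (hg' : ∀ x, ‖g' x‖ ≤ r) (hr : r < 1)
    (f : E → F) :
    ∫ x in (fun x => x + g x) '' s, f x ∂μ = ∫ x in s, (1 + g' x).det • f (x + g x) ∂μ := by
  have hlip : LipschitzWith r.toNNReal g := lipschitzOnWith_univ.mp <|
    convex_univ.lipschitzOnWith_of_nnnorm_hasFDerivWithin_le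
      (fun x _ => (hg x).hasFDerivWithinAt) fun x _ => by
        simpa [← NNReal.coe_le_coe] using (hg' x).trans (le_max_left r 0)
  have hinj : Injective fun x => x + g x :=
    (AntilipschitzWith.id.add_lipschitzWith hlip (by simpa using hr)).injective
  rw [integral_image_eq_integral_abs_det_fderiv_smul μ hs (f := fun x => x + g x)
    (fun x _ => ((hasFDerivAt_id x).add (hg x)).hasFDerivWithinAt) hinj.injOn]
  refine setIntegral_congr_fun hs fun x _ => ?_
  rw [← ContinuousLinearMap.one_def,
    abs_of_pos (ContinuousLinearMap.det_one_add_pos_of_norm_lt_one ((hg' x).trans_lt hr))]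

theorem hasDerivAt_setIntegral_of_continuous_deriv {α G : Type*} [MetricSpace α] [ProperSpace α]
    [MeasurableSpace α] [OpensMeasurableSpace α] [NormedAddCommGroup G] [NormedSpace ℝ G]
    {μ : Measure α} [IsFiniteMeasureOnCompacts μ] {s : Set α} (hsb : Bornology.IsBounded s)
    (hs : MeasurableSet s) {F F' : ℝ → α → G} (hF : Continuous (uncurry F))
    (hF' : Continuous (uncurry F')) (hderiv : ∀ ρ x, HasDerivAt (F · x) (F' ρ x) ρ) (ρ₀ : ℝ) :
    HasDerivAt (fun ρ => ∫ x in s, F ρ x ∂μ) (∫ x in s, F' ρ₀ x ∂μ) ρ₀ := by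
  obtain ⟨B, hB⟩ := ((isCompact_closedBall ρ₀ 1).prod
    hsb.isCompact_closure).exists_bound_of_continuousOn hF'.continuousOn
  have : IsFiniteMeasure (μ.restrict s) := isFiniteMeasure_restrict.mpr hsb.measure_lt_top.ne
  have hF_int : IntegrableOn (F ρ₀) s μ :=
    ((hF.comp (Continuous.prodMk_right ρ₀)).continuousOn.integrableOn_compact
      hsb.isCompact_closure).mono_set subset_closure
  refine (hasDerivAt_integral_of_dominated_loc_of_deriv_le (bound := fun _ => B)
    (ball_mem_nhds ρ₀ one_pos)
    (Eventually.of_forall fun ρ => (hF.comp (Continuous.prodMk_right ρ)).aestronglyMeasurable)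
    hF_int (hF'.comp (Continuous.prodMk_right ρ₀)).aestronglyMeasurable ?_ (integrable_const B)
    (Eventually.of_forall fun x ρ _ => hderiv ρ x)).2
  refine (ae_restrict_iff' hs).mpr (Eventually.of_forall fun x hx ρ hρ => hB (ρ, x) ?_)
  exact ⟨ball_subset_closedBall hρ, subset_closure hx⟩

section ShapePullback

variable {E G : Type*} [NormedAddCommGroup E] [NormedSpace ℝ E]

theorem continuous_det_one_add_smul_fderiv {θ : E → E} (hθ : ContDiff ℝ 1 θ) :
    Continuous fun p : ℝ × E => (1 + p.1 • fderiv ℝ θ p.2).det :=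
  ContinuousLinearMap.continuous_det.comp (continuous_const.add
    (continuous_fst.smul ((hθ.continuous_fderiv one_ne_zero).comp continuous_snd)))

variable [NormedAddCommGroup G] [NormedSpace ℝ G] (θ : E → E) (f : E → G)

noncomputable def shapePullback (ρ : ℝ) (x : E) : G :=
  (1 + ρ • fderiv ℝ θ x).det • f (x + ρ • θ x)

noncomputable def shapePullbackDeriv (ρ : ℝ) (x : E) : G :=
  (1 + ρ • fderiv ℝ θ x).det • fderiv ℝ f (x + ρ • θ x) (θ x) +
    deriv (fun t : ℝ => (1 + t • fderiv ℝ θ x).det) ρ • f (x + ρ • θ x)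

variable {θ f}

theorem continuous_shapePullback (hθ : ContDiff ℝ 1 θ) (hf : Continuous f) :
    Continuous (uncurry (shapePullback θ f)) :=
  (continuous_det_one_add_smul_fderiv hθ).smul (hf.comp (by fun_prop))

variable [FiniteDimensional ℝ E]

theorem hasDerivAt_shapePullback (hf : Differentiable ℝ f) (ρ : ℝ) (x : E) :
    HasDerivAt (shapePullback θ f · x) (shapePullbackDeriv θ f ρ x) ρ := by
  have hT : HasDerivAt (fun t : ℝ => x + t • θ x) (θ x) ρ := by
    simpa using ((hasDerivAt_id ρ).smul_const (θ x)).const_add x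
  have hdet := (ContinuousLinearMap.hasDerivAt_det_one_add_smul (fderiv ℝ θ x) ρ).differentiableAt
  exact hdet.hasDerivAt.smul ((hf _).hasFDerivAt.comp_hasDerivAt ρ hT)

theorem shapePullbackDeriv_zero (x : E) :
    shapePullbackDeriv θ f 0 x =
      fderiv ℝ f x (θ x) + LinearMap.trace ℝ E (fderiv ℝ θ x : E →ₗ[ℝ] E) • f x := by
  simp only [shapePullbackDeriv,
    (ContinuousLinearMap.hasDerivAt_det_one_add_smul_zero (fderiv ℝ θ x)).deriv, zero_smul,
    add_zero]
  simp [ContinuousLinearMap.det]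

theorem continuous_shapePullbackDeriv (hθ : ContDiff ℝ 1 θ) (hf : ContDiff ℝ 1 f) :
    Continuous (uncurry (shapePullbackDeriv θ f)) := by
  have hT : Continuous fun p : ℝ × E => p.2 + p.1 • θ p.2 := by fun_prop
  have hdet' : Continuous fun p : ℝ × E =>
      deriv (fun t : ℝ => (1 + t • fderiv ℝ θ p.2).det) p.1 :=
    ContinuousLinearMap.continuous_deriv_det_one_add_smul.comp
      (continuous_fst.prodMk ((hθ.continuous_fderiv one_ne_zero).comp continuous_snd))
  have hdf : Continuous fun p : ℝ × E => fderiv ℝ f (p.2 + p.1 • θ p.2) (θ p.2) :=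
    ((hf.continuous_fderiv one_ne_zero).comp hT).clm_apply (hθ.continuous.comp continuous_snd)
  exact ((continuous_det_one_add_smul_fderiv hθ).smul hdf).add (hdet'.smul (hf.continuous.comp hT))

theorem setIntegral_image_eventuallyEq_setIntegral_shapePullback [MeasurableSpace E]
    [BorelSpace E] (μ : Measure E) [μ.IsAddHaarMeasure] {s : Set E} (hs : MeasurableSet s)
    (hθ : Differentiable ℝ θ) {C : ℝ} (hC : ∀ x, ‖fderiv ℝ θ x‖ ≤ C) :
    (fun ρ : ℝ => ∫ x in (fun x => x + ρ • θ x) '' s, f x ∂μ) =ᶠ[𝓝 0]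
      fun ρ => ∫ x in s, shapePullback θ f ρ x ∂μ := by
  have hC0 : 0 ≤ C := (norm_nonneg _).trans (hC 0)
  filter_upwards [ball_mem_nhds (0 : ℝ) (inv_pos.mpr (by linarith : 0 < C + 1))] with ρ hρ
  have hsmall : |ρ| * C < 1 := by
    rw [mem_ball_zero_iff, Real.norm_eq_abs] at hρ
    nlinarith [abs_nonneg ρ, inv_mul_cancel₀ (by linarith : C + 1 ≠ 0)]
  exact setIntegral_image_add_eq_setIntegral_det_smul μ hs
    (fun x => (hθ x).hasFDerivAt.const_smul ρ)
    (fun x => by rw [norm_smul, Real.norm_eq_abs]; gcongr; exact hC x) hsmall f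

end ShapePullback

theorem volume_functional_shape_derivative_general
    (d : ℕ) (Ω : Set (Fin d → ℝ)) (hΩb : Bornology.IsBounded Ω) (hΩm : MeasurableSet Ω)
    (f : (Fin d → ℝ) → ℝ) (hf : ContDiff ℝ 1 f)
    (θ : (Fin d → ℝ) → (Fin d → ℝ)) (hθ : ContDiff ℝ 1 θ)
    (C : ℝ) (hC : ∀ x, ‖fderiv ℝ θ x‖ ≤ C) :
    HasDerivAt
      (fun ρ : ℝ => ∫ x in ((fun x => x + ρ • θ x) '' Ω), f x)
      (∫ x in Ω,
        (fderiv ℝ f x (θ x) +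
          f x * LinearMap.trace ℝ (Fin d → ℝ) (fderiv ℝ θ x).toLinearMap)) 0 := by
  have hderiv := hasDerivAt_setIntegral_of_continuous_deriv (μ := volume) hΩb hΩm
    (continuous_shapePullback hθ hf.continuous) (continuous_shapePullbackDeriv hθ hf)
    (hasDerivAt_shapePullback (hf.differentiable one_ne_zero)) 0
  simp only [shapePullbackDeriv_zero, smul_eq_mul, mul_comm] at hderiv
  exact hderiv.congr_of_eventuallyEq
    (setIntegral_image_eventuallyEq_setIntegral_shapePullback volume hΩm
      (hθ.differentiable one_ne_zero) hC)

/-- Shape derivative of a volume functional with Eulerian integrand: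
`j(ρ) = ∫_{T_ρ(Ω)} f dx` is differentiable at `ρ = 0` with
`j'(0) = ∫_Ω (∇f·θ + f div θ) dx`. -/
theorem volume_functional_shape_derivative
    (d : ℕ) (Ω : Set (Fin d → ℝ)) (hΩb : Bornology.IsBounded Ω) (hΩm : MeasurableSet Ω)
    (f : (Fin d → ℝ) → ℝ) (hf : ContDiff ℝ 1 f) (hfc : HasCompactSupport f)
    (θ : (Fin d → ℝ) → (Fin d → ℝ)) (hθ : ContDiff ℝ 1 θ)
    (C : ℝ) (hC : ∀ x, ‖fderiv ℝ θ x‖ ≤ C) :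
    HasDerivAt
      (fun ρ : ℝ => ∫ x in ((fun x => x + ρ • θ x) '' Ω), f x)
      (∫ x in Ω,
        (fderiv ℝ f x (θ x) +
          f x * LinearMap.trace ℝ (Fin d → ℝ) (fderiv ℝ θ x).toLinearMap)) 0 :=
  volume_functional_shape_derivative_general d Ω hΩb hΩm f hf θ hθ C hC
end

section
/- Let Ω ⊂ ℝ^d be bounded measurable, and suppose ρ ↦ u_ρ ∈ L¹(Ω) is a family of functions such that the material derivative u̇(x) := lim_{ρ→0} (u_ρ(x+ρθ(x)) - u_0(x))/ρ exists uniformly on Ω, with u_0 C¹ and θ C¹ with bounded derivative. Then j(ρ) = ∫_{T_ρ(Ω)} u_ρ dx, where T_ρ(x) = x + ρθ(x), satisfies j'(0) = ∫_Ω (u̇(x) + u_0(x) div θ(x)) dx. -/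
open MeasureTheory

set_option maxHeartbeats 2000000

section AuxDet
open Polynomial Matrix

noncomputable def TDVFaux.qp (n : ℕ) (M : Matrix (Fin n) (Fin n) ℝ) : ℝ[X] :=
  Matrix.det (1 + (X : ℝ[X]) • M.map C)

namespace TDVFaux

set_option maxHeartbeats 1000000

lemma qp_natDegree_le (n : ℕ) (M : Matrix (Fin n) (Fin n) ℝ) : (qp n M).natDegree ≤ n := by
  rw [qp, Matrix.det_apply']
  refine Polynomial.natDegree_sum_le_of_forall_le _ _ fun σ _ => ?_
  refine (Polynomial.natDegree_mul_le).trans ?_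
  rw [Polynomial.natDegree_intCast, zero_add]
  refine (Polynomial.natDegree_prod_le _ _).trans ?_
  calc ∑ i : Fin n, ((1 + (X : ℝ[X]) • M.map C) (σ i) i).natDegree
      ≤ ∑ _i : Fin n, 1 := by
        refine Finset.sum_le_sum fun i _ => ?_
        simp only [Matrix.add_apply, Matrix.smul_apply, Matrix.map_apply, smul_eq_mul]
        refine (Polynomial.natDegree_add_le _ _).trans ?_
        simp only [max_le_iff]
        constructor
        · refine le_trans ?_ (Nat.zero_le 1)
          rcases eq_or_ne (σ i) i with h | h
          · rw [h, Matrix.one_apply_eq, Polynomial.natDegree_one]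
          · rw [Matrix.one_apply_ne h, Polynomial.natDegree_zero]
        · exact (Polynomial.natDegree_mul_le).trans (by simp)
    _ = n := by simp

lemma qp_eval (n : ℕ) (M : Matrix (Fin n) (Fin n) ℝ) (t : ℝ) :
    (qp n M).eval t = Matrix.det (1 + t • M) := by
  have h1 : (qp n M).eval t = Polynomial.evalRingHom t (qp n M) := rfl
  rw [h1, qp, RingHom.map_det]
  congr 1
  ext i j
  simp only [RingHom.mapMatrix_apply, Matrix.map_apply, Matrix.add_apply, Matrix.smul_apply,
    smul_eq_mul, Matrix.one_apply, coe_evalRingHom, Polynomial.eval_add, Polynomial.eval_mul,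
    Polynomial.eval_X, Polynomial.eval_C]
  split_ifs <;> simp [mul_comm]

lemma qp_coeff_continuous (n : ℕ) (k : ℕ) :
    Continuous fun M : Matrix (Fin n) (Fin n) ℝ => (qp n M).coeff k := by
  classical
  set s : Finset ℝ := (Finset.range (n + 1)).image (Nat.cast) with hs
  have hinj : Set.InjOn (id : ℝ → ℝ) s := Function.injective_id.injOn
  have hcard : s.card = n + 1 := by
    rw [hs, Finset.card_image_of_injective _ Nat.cast_injective, Finset.card_range]
  have hrepr : ∀ M : Matrix (Fin n) (Fin n) ℝ,
      (qp n M).coeff k = ∑ t ∈ s, Matrix.det (1 + t • M) * (Lagrange.basis s id t).coeff k := by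
    intro M
    have hdeg : (qp n M).degree < (s.card : ℕ) := by
      rw [hcard]
      exact lt_of_le_of_lt Polynomial.degree_le_natDegree
        (by exact_mod_cast Nat.lt_succ_of_le (qp_natDegree_le n M))
    conv_lhs => rw [Lagrange.eq_interpolate hinj hdeg]
    rw [Lagrange.interpolate_apply, Polynomial.finset_sum_coeff]
    refine Finset.sum_congr rfl fun t _ => ?_
    rw [Polynomial.coeff_C_mul, id, qp_eval]
  simp only [hrepr]
  refine continuous_finset_sum _ fun t _ => ?_
  exact ((continuous_const.add (continuous_id.const_smul t)).matrix_det).mul continuous_const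



lemma det_expansion (n : ℕ) (M : Matrix (Fin n) (Fin n) ℝ) (ρ : ℝ) :
    Matrix.det (1 + ρ • M) = 1 + Matrix.trace M * ρ +
      (∑ k ∈ Finset.range (n + 1), (qp n M).coeff (k + 2) * ρ ^ k) * ρ ^ 2 := by
  rw [Matrix.det_one_add_smul]
  congr 2
  rw [show (1 + (X : ℝ[X]) • M.map C).det = qp n M from rfl]
  rw [Polynomial.eval_eq_sum_range'
    (lt_of_le_of_lt (Polynomial.natDegree_divX_le.trans Polynomial.natDegree_divX_le)
      (Nat.lt_succ_of_le (qp_natDegree_le n M))) ρ]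
  refine Finset.sum_congr rfl fun k _ => ?_
  rw [Polynomial.coeff_divX, Polynomial.coeff_divX]

lemma exists_bound {Y : Type*} [TopologicalSpace Y] {K : Set Y} (hK : IsCompact K)
    {n : ℕ} {M : Y → Matrix (Fin n) (Fin n) ℝ} (hM : Continuous M) :
    ∃ B : ℝ, 0 ≤ B ∧ (∀ x ∈ K, |Matrix.trace (M x)| ≤ B) ∧
      ∀ ρ : ℝ, |ρ| ≤ 1 → ∀ x ∈ K,
        |Matrix.det (1 + ρ • M x) - (1 + Matrix.trace (M x) * ρ)| ≤ B * ρ ^ 2 := by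
  classical
  set F : ℝ × Y → ℝ := fun p => ∑ k ∈ Finset.range (n + 1), (qp n (M p.2)).coeff (k + 2) * p.1 ^ k
    with hF
  have hFcont : Continuous F := by
    refine continuous_finset_sum _ fun k _ => ?_
    exact ((qp_coeff_continuous n (k + 2)).comp (hM.comp continuous_snd)).mul
      (continuous_fst.pow k)
  obtain ⟨B1, hB1⟩ := ((isCompact_Icc (a := (-1:ℝ)) (b := 1)).prod hK).exists_bound_of_continuousOn
    hFcont.continuousOn
  have htrc : Continuous fun x => Matrix.trace (M x) := hM.matrix_trace
  obtain ⟨B2, hB2⟩ := hK.exists_bound_of_continuousOn htrc.continuousOn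
  refine ⟨max 0 (max B1 B2), le_max_left _ _, fun x hx => ?_, fun ρ hρ x hx => ?_⟩
  · exact le_trans (hB2 x hx) (le_max_of_le_right (le_max_right _ _))
  · have h1 : Matrix.det (1 + ρ • M x) - (1 + Matrix.trace (M x) * ρ) = F (ρ, x) * ρ ^ 2 := by
      rw [det_expansion]; ring
    rw [h1, abs_mul, abs_pow, sq_abs]
    refine mul_le_mul_of_nonneg_right ?_ (sq_nonneg ρ)
    have := hB1 (ρ, x) ⟨abs_le.mp hρ, hx⟩
    rw [Real.norm_eq_abs] at this
    exact this.trans (le_max_of_le_right (le_max_left _ _))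

end TDVFaux

end AuxDet

/-- Tube derivative of a volume functional (Hadamard form): if the material derivative
`u̇(x) = lim_{ρ→0} (u_ρ(x+ρθ(x)) - u_0(x))/ρ` exists uniformly on `Ω`, then
`j(ρ) = ∫_{T_ρ(Ω)} u_ρ dx` satisfies `j'(0) = ∫_Ω (u̇ + u_0 div θ) dx`. -/
theorem tube_derivative_volume_functional
    (d : ℕ) (Ω : Set (Fin d → ℝ)) (hΩb : Bornology.IsBounded Ω) (hΩm : MeasurableSet Ω)
    (u : ℝ → (Fin d → ℝ) → ℝ) (udot : (Fin d → ℝ) → ℝ)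
    (hu0 : ContDiff ℝ 1 (u 0))
    (θ : (Fin d → ℝ) → (Fin d → ℝ)) (hθ : ContDiff ℝ 1 θ)
    (C : ℝ) (hC : ∀ x, ‖fderiv ℝ θ x‖ ≤ C)
    (hL1 : ∀ ρ : ℝ, IntegrableOn (u ρ) ((fun x => x + ρ • θ x) '' Ω))
    (hmat : ∀ ε > (0:ℝ), ∃ δ > (0:ℝ), ∀ ρ : ℝ, ρ ≠ 0 → |ρ| < δ → ∀ x ∈ Ω,
      |(u ρ (x + ρ • θ x) - u 0 x) / ρ - udot x| < ε) :
    HasDerivAt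
      (fun ρ : ℝ => ∫ x in ((fun x => x + ρ • θ x) '' Ω), u ρ x)
      (∫ x in Ω,
        (udot x + u 0 x * LinearMap.trace ℝ (Fin d → ℝ) (fderiv ℝ θ x).toLinearMap)) 0 := by
  classical
  have hθd : Differentiable ℝ θ := hθ.differentiable one_ne_zero
  have hC0 : (0:ℝ) ≤ C := le_trans (norm_nonneg _) (hC 0)
  set b := Pi.basisFun ℝ (Fin d) with hb
  set Mx : (Fin d → ℝ) → Matrix (Fin d) (Fin d) ℝ :=
    fun x => LinearMap.toMatrix b b (fderiv ℝ θ x).toLinearMap with hMx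
  have hfdc : Continuous fun x => fderiv ℝ θ x := hθ.continuous_fderiv one_ne_zero
  have hMxcont : Continuous Mx := by
    apply continuous_matrix
    intro i j
    have : (fun x => Mx x i j) = fun x => (fderiv ℝ θ x) (b j) i := by
      funext x
      simp [hMx, LinearMap.toMatrix_apply, hb]
    rw [this]
    exact (continuous_apply i).comp (hfdc.clm_apply continuous_const)
  have hdet : ∀ (ρ : ℝ) (x : Fin d → ℝ),
      (ContinuousLinearMap.id ℝ (Fin d → ℝ) + ρ • fderiv ℝ θ x).det
        = Matrix.det (1 + ρ • Mx x) := by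
    intro ρ x
    rw [ContinuousLinearMap.det, ← LinearMap.det_toMatrix b]
    congr 1
    rw [ContinuousLinearMap.coe_add, ContinuousLinearMap.coe_smul, ContinuousLinearMap.coe_id,
      map_add, LinearEquiv.map_smul, LinearMap.toMatrix_id]
  have htr : ∀ x : Fin d → ℝ,
      LinearMap.trace ℝ (Fin d → ℝ) (fderiv ℝ θ x).toLinearMap = Matrix.trace (Mx x) :=
    fun x => LinearMap.trace_eq_matrix_trace ℝ b _
  -- compactness and bounds
  have hK : IsCompact (closure Ω) := hΩb.isCompact_closure
  obtain ⟨B, hB0, hBtr, hBrem⟩ := TDVFaux.exists_bound hK hMxcont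
  obtain ⟨M0, hM0⟩ := hK.exists_bound_of_continuousOn hu0.continuous.continuousOn
  set M1 : ℝ := max M0 0 with hM1
  have hM1nn : (0:ℝ) ≤ M1 := le_max_right _ _
  have hM0' : ∀ x ∈ Ω, |u 0 x| ≤ M1 := fun x hx =>
    le_max_of_le_left (by simpa [Real.norm_eq_abs] using hM0 x (subset_closure hx))
  have hμ : volume Ω < ⊤ := lt_of_le_of_lt (measure_mono subset_closure) hK.measure_lt_top
  set D : ℝ → (Fin d → ℝ) → ℝ := fun ρ x => Matrix.det (1 + ρ • Mx x) with hD
  have hDcont : ∀ ρ : ℝ, Continuous (D ρ) :=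
    fun ρ => (continuous_const.add (hMxcont.const_smul ρ)).matrix_det
  -- smallness threshold
  set δ₀ : ℝ := min (1 / (C + 1)) (min 1 (1 / (4 * (B + 1)))) with hδ₀
  have hδ₀pos : 0 < δ₀ := by
    apply lt_min (by positivity) (lt_min one_pos (by positivity))
  have hsmall : ∀ ρ : ℝ, |ρ| < δ₀ → ∀ x ∈ Ω,
      |D ρ x - 1| ≤ 2 * (B + 1) * |ρ| ∧ (1:ℝ)/2 ≤ D ρ x ∧ |D ρ x| ≤ 2 ∧
        |D ρ x - 1 - Matrix.trace (Mx x) * ρ| ≤ B * ρ ^ 2 := by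
    intro ρ hρ x hx
    have hρ1 : |ρ| ≤ 1 := le_of_lt (lt_of_lt_of_le hρ ((min_le_right _ _).trans (min_le_left _ _)))
    have hρB : |ρ| < 1 / (4 * (B + 1)) :=
      lt_of_lt_of_le hρ ((min_le_right _ _).trans (min_le_right _ _))
    have h1 := hBrem ρ hρ1 x (subset_closure hx)
    have h2 := hBtr x (subset_closure hx)
    have h3 : |Matrix.trace (Mx x) * ρ| ≤ B * |ρ| := by
      rw [abs_mul]; exact mul_le_mul_of_nonneg_right h2 (abs_nonneg ρ)
    have h4 : B * ρ ^ 2 ≤ B * |ρ| := by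
      have : ρ ^ 2 ≤ |ρ| := by
        rw [← sq_abs]; nlinarith [abs_nonneg ρ]
      exact mul_le_mul_of_nonneg_left this hB0
    have h5 : |D ρ x - 1| ≤ 2 * (B + 1) * |ρ| := by
      have := abs_sub_abs_le_abs_sub (D ρ x - 1) (Matrix.trace (Mx x) * ρ)
      have habs : |D ρ x - 1| ≤ B * ρ ^ 2 + B * |ρ| := by
        have h6 : D ρ x - 1 = (D ρ x - (1 + Matrix.trace (Mx x) * ρ)) + Matrix.trace (Mx x) * ρ := by
          ring
        rw [h6]
        exact (abs_add_le _ _).trans (by exact add_le_add (by simpa using h1) h3)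
      nlinarith [abs_nonneg ρ]
    have hhalf : |D ρ x - 1| ≤ 1/2 := by
      have : 2 * (B + 1) * |ρ| ≤ 1/2 := by
        rw [lt_div_iff₀ (by positivity)] at hρB
        nlinarith [abs_nonneg ρ]
      linarith
    refine ⟨h5, ?_, ?_, by rw [sub_sub]; simpa using h1⟩
    · cases' abs_le.mp hhalf with hl hr; linarith
    · cases' abs_le.mp hhalf with hl hr
      rw [abs_le]; constructor <;> linarith
  -- injectivity
  have hlip : ∀ x y : Fin d → ℝ, ‖θ y - θ x‖ ≤ C * ‖y - x‖ := by
    intro x y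
    exact Convex.norm_image_sub_le_of_norm_fderiv_le (fun z _ => hθd z) (fun z _ => hC z)
      convex_univ (Set.mem_univ x) (Set.mem_univ y)
  have hinj : ∀ ρ : ℝ, |ρ| < δ₀ → Set.InjOn (fun y => y + ρ • θ y) Ω := by
    intro ρ hρ x hx y hy hxy
    have hρC : |ρ| * (C + 1) < 1 := by
      have h1 : |ρ| < 1 / (C + 1) := lt_of_lt_of_le hρ (min_le_left _ _)
      rw [lt_div_iff₀ (by linarith)] at h1
      exact h1
    have hxy' : x + ρ • θ x = y + ρ • θ y := hxy
    have h1 : x - y = ρ • (θ y - θ x) := by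
      rw [smul_sub, sub_eq_sub_iff_add_eq_add]
      exact hxy'.trans (add_comm _ _)
    have h2 : ‖x - y‖ ≤ |ρ| * (C * ‖y - x‖) := by
      rw [h1, norm_smul, Real.norm_eq_abs]
      exact mul_le_mul_of_nonneg_left (hlip x y) (abs_nonneg ρ)
    rw [norm_sub_rev y x] at h2
    have h3 : ‖x - y‖ = 0 := by nlinarith [norm_nonneg (x - y), abs_nonneg ρ]
    have := norm_eq_zero.mp h3
    exact sub_eq_zero.mp this
  -- change of variables
  have hTd : ∀ (ρ : ℝ) (x : Fin d → ℝ), HasFDerivAt (fun y => y + ρ • θ y)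
      (ContinuousLinearMap.id ℝ (Fin d → ℝ) + ρ • fderiv ℝ θ x) x :=
    fun ρ x => (hasFDerivAt_id x).add (((hθd x).hasFDerivAt).const_smul ρ)
  have hDpos : ∀ ρ : ℝ, |ρ| < δ₀ → ∀ x ∈ Ω, (0:ℝ) < D ρ x := by
    intro ρ hρ x hx
    have := (hsmall ρ hρ x hx).2.1
    linarith
  have hCoV : ∀ ρ : ℝ, |ρ| < δ₀ →
      (∫ x in ((fun x => x + ρ • θ x) '' Ω), u ρ x)
        = ∫ x in Ω, D ρ x * u ρ (x + ρ • θ x) := by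
    intro ρ hρ
    rw [integral_image_eq_integral_abs_det_fderiv_smul volume hΩm
      (fun x _ => (hTd ρ x).hasFDerivWithinAt) (hinj ρ hρ) (u ρ)]
    refine setIntegral_congr_fun hΩm (fun x hx => ?_)
    rw [hdet, smul_eq_mul, abs_of_pos (hDpos ρ hρ x hx)]
  have hIntP : ∀ ρ : ℝ, |ρ| < δ₀ →
      IntegrableOn (fun x => D ρ x * u ρ (x + ρ • θ x)) Ω := by
    intro ρ hρ
    have h := (integrableOn_image_iff_integrableOn_abs_det_fderiv_smul volume hΩm
      (fun x _ => (hTd ρ x).hasFDerivWithinAt) (hinj ρ hρ) (u ρ)).mp (hL1 ρ)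
    refine h.congr_fun (fun x hx => ?_) hΩm
    dsimp only
    rw [hdet, smul_eq_mul, abs_of_pos (hDpos ρ hρ x hx)]
  have hu0int : IntegrableOn (u 0) Ω :=
    (hu0.continuous.continuousOn.integrableOn_compact hK).mono_set subset_closure
  have hvint : ∀ ρ : ℝ, |ρ| < δ₀ → IntegrableOn (fun x => u ρ (x + ρ • θ x)) Ω := by
    intro ρ hρ
    have h1 : IntegrableOn (fun x => (D ρ x)⁻¹ * (D ρ x * u ρ (x + ρ • θ x))) Ω := by
      refine Integrable.bdd_mul (c := 2) (hIntP ρ hρ)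
        ((hDcont ρ).measurable.inv.aestronglyMeasurable) ?_
      filter_upwards [ae_restrict_mem hΩm] with x hx
      rw [Real.norm_eq_abs, abs_inv]
      have h2 := (hsmall ρ hρ x hx).2.1
      have h3 : (0:ℝ) < D ρ x := by linarith
      rw [abs_of_pos h3]
      rw [inv_le_comm₀ (by linarith) (by norm_num)]
      linarith
    refine h1.congr_fun (fun x hx => ?_) hΩm
    dsimp only
    rw [inv_mul_cancel_left₀ (ne_of_gt (hDpos ρ hρ x hx))]
  -- approximating sequence for udot
  have hseq : ∀ n : ℕ, ∃ r : ℝ, 0 < r ∧ |r| < δ₀ ∧ ∀ x ∈ Ω,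
      |(u r (x + r • θ x) - u 0 x) / r - udot x| < 1 / (n + 1) := by
    intro n
    obtain ⟨δ, hδpos, hδ⟩ := hmat (1 / (n + 1)) (by positivity)
    refine ⟨min δ δ₀ / 2, by positivity, ?_, fun x hx => ?_⟩
    · rw [abs_of_pos (by positivity)]
      have h := min_le_right δ δ₀
      linarith
    · refine hδ _ (by positivity) ?_ x hx
      rw [abs_of_pos (by positivity)]
      have h := min_le_left δ δ₀
      linarith
  choose r hr0 hrδ hrest using hseq
  have hsint : ∀ n : ℕ, IntegrableOn (fun x => (u (r n) (x + r n • θ x) - u 0 x) / r n) Ω :=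
    fun n => ((hvint (r n) (hrδ n)).sub hu0int).div_const _
  have hudotm : AEStronglyMeasurable udot (volume.restrict Ω) := by
    refine aestronglyMeasurable_of_tendsto_ae Filter.atTop (fun n => (hsint n).aestronglyMeasurable) ?_
    filter_upwards [ae_restrict_mem hΩm] with x hx
    refine tendsto_iff_dist_tendsto_zero.mpr ?_
    refine squeeze_zero (fun n => dist_nonneg) (fun n => ?_) tendsto_one_div_add_atTop_nhds_zero_nat
    rw [Real.dist_eq]
    exact le_of_lt (hrest n x hx)
  have hudotint : IntegrableOn udot Ω := by
    have hcon1 : IntegrableOn (fun _ : Fin d → ℝ => (1:ℝ)) Ω := integrableOn_const hμ.ne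
    have hdom : IntegrableOn
        (fun x => ‖(u (r 0) (x + r 0 • θ x) - u 0 x) / r 0‖ + 1) Ω := (hsint 0).norm.add hcon1
    refine Integrable.mono' hdom hudotm ?_
    filter_upwards [ae_restrict_mem hΩm] with x hx
    have h1 := hrest 0 x hx
    rw [Real.norm_eq_abs]
    have h2 : |udot x| - |(u (r 0) (x + r 0 • θ x) - u 0 x) / r 0| ≤
        |(u (r 0) (x + r 0 • θ x) - u 0 x) / r 0 - udot x| := by
      rw [abs_sub_comm]
      exact abs_sub_abs_le_abs_sub _ _
    simp only [Real.norm_eq_abs]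
    norm_num at h1
    linarith
  have hτcont : Continuous fun x => Matrix.trace (Mx x) := hMxcont.matrix_trace
  have hwint : IntegrableOn (fun x => udot x + u 0 x * Matrix.trace (Mx x)) Ω := by
    refine hudotint.add ?_
    exact ((hu0.continuous.mul hτcont).continuousOn.integrableOn_compact hK).mono_set
      subset_closure
  -- rewrite the target integral
  have hgoal : (∫ x in Ω,
        (udot x + u 0 x * LinearMap.trace ℝ (Fin d → ℝ) (fderiv ℝ θ x).toLinearMap))
      = ∫ x in Ω, (udot x + u 0 x * Matrix.trace (Mx x)) := by
    simp only [htr]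
  rw [hgoal]
  have hj0 : (∫ x in ((fun x : Fin d → ℝ => x + (0:ℝ) • θ x) '' Ω), u 0 x) = ∫ x in Ω, u 0 x := by
    have himg : (fun x : Fin d → ℝ => x + (0:ℝ) • θ x) = id := by
      funext x; simp
    rw [himg, Set.image_id]
  rw [hasDerivAt_iff_tendsto_slope, Metric.tendsto_nhdsWithin_nhds]
  intro ε hε
  set U : ℝ := ∫ x in Ω, |udot x| with hU
  have hUnn : 0 ≤ U := integral_nonneg fun x => abs_nonneg _
  set μΩ : ℝ := (volume Ω).toReal with hμΩ
  have hμΩnn : 0 ≤ μΩ := ENNReal.toReal_nonneg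
  set εs : ℝ := ε / (4 * (μΩ + 1)) with hεs
  have hεspos : 0 < εs := by positivity
  obtain ⟨δ₂, hδ₂pos, hδ₂⟩ := hmat εs hεspos
  set Z : ℝ := 2 * (B + 1) * U + M1 * B * μΩ with hZ
  have hZnn : 0 ≤ Z := by positivity
  refine ⟨min (min δ₀ δ₂) (ε / (2 * (Z + 1))), by positivity, ?_⟩
  intro ρ hρne hρd
  rw [Real.dist_eq, sub_zero] at hρd
  have hρδ₀ : |ρ| < δ₀ := lt_of_lt_of_le hρd ((min_le_left _ _).trans (min_le_left _ _))
  have hρδ₂ : |ρ| < δ₂ := lt_of_lt_of_le hρd ((min_le_left _ _).trans (min_le_right _ _))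
  have hρZ : |ρ| < ε / (2 * (Z + 1)) := lt_of_lt_of_le hρd (min_le_right _ _)
  have hρ0 : ρ ≠ 0 := hρne
  have hslope : slope (fun ρ : ℝ => ∫ x in ((fun x => x + ρ • θ x) '' Ω), u ρ x) 0 ρ
      = ∫ x in Ω, (D ρ x * u ρ (x + ρ • θ x) - u 0 x) / ρ := by
    simp only [slope_def_field, sub_zero]
    rw [hCoV ρ hρδ₀, hj0, ← integral_sub (hIntP ρ hρδ₀) hu0int, ← integral_div]
  rw [hslope, Real.dist_eq]
  -- pointwise bound
  have hqint : IntegrableOn (fun x => (D ρ x * u ρ (x + ρ • θ x) - u 0 x) / ρ) Ω :=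
    ((hIntP ρ hρδ₀).sub hu0int).div_const ρ
  have hqw : IntegrableOn (fun x => (D ρ x * u ρ (x + ρ • θ x) - u 0 x) / ρ
      - (udot x + u 0 x * Matrix.trace (Mx x))) Ω := hqint.sub hwint
  have hbint : IntegrableOn
      (fun x => 2 * εs + M1 * (B * |ρ|) + 2 * (B + 1) * |ρ| * |udot x|) Ω := by
    refine Integrable.add ?_ (hudotint.abs.const_mul _)
    exact integrableOn_const hμ.ne
  have hpt : ∀ x ∈ Ω, |(D ρ x * u ρ (x + ρ • θ x) - u 0 x) / ρ
      - (udot x + u 0 x * Matrix.trace (Mx x))|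
      ≤ 2 * εs + M1 * (B * |ρ|) + 2 * (B + 1) * |ρ| * |udot x| := by
    intro x hx
    have h1 := hδ₂ ρ hρ0 hρδ₂ x hx
    obtain ⟨hD1, hD2, hD3, hD4⟩ := hsmall ρ hρδ₀ x hx
    have hu0b := hM0' x hx
    have hident : (D ρ x * u ρ (x + ρ • θ x) - u 0 x) / ρ
        - (udot x + u 0 x * Matrix.trace (Mx x))
        = D ρ x * ((u ρ (x + ρ • θ x) - u 0 x) / ρ - udot x)
          + (D ρ x - 1) * udot x
          + u 0 x * ((D ρ x - 1 - Matrix.trace (Mx x) * ρ) / ρ) := by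
      field_simp
      ring
    rw [hident]
    have b1 : |D ρ x * ((u ρ (x + ρ • θ x) - u 0 x) / ρ - udot x)| ≤ 2 * εs := by
      rw [abs_mul]
      exact mul_le_mul hD3 (le_of_lt h1) (abs_nonneg _) (by norm_num)
    have b2 : |(D ρ x - 1) * udot x| ≤ 2 * (B + 1) * |ρ| * |udot x| := by
      rw [abs_mul]
      exact mul_le_mul_of_nonneg_right hD1 (abs_nonneg _)
    have b3 : |u 0 x * ((D ρ x - 1 - Matrix.trace (Mx x) * ρ) / ρ)| ≤ M1 * (B * |ρ|) := by
      rw [abs_mul, abs_div]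
      refine mul_le_mul hu0b ?_ (div_nonneg (abs_nonneg _) (abs_nonneg _)) hM1nn
      rw [div_le_iff₀ (abs_pos.mpr hρ0)]
      calc |D ρ x - 1 - Matrix.trace (Mx x) * ρ| ≤ B * ρ ^ 2 := hD4
        _ = B * |ρ| * |ρ| := by rw [← sq_abs]; ring
    calc |D ρ x * ((u ρ (x + ρ • θ x) - u 0 x) / ρ - udot x)
          + (D ρ x - 1) * udot x
          + u 0 x * ((D ρ x - 1 - Matrix.trace (Mx x) * ρ) / ρ)|
        ≤ |D ρ x * ((u ρ (x + ρ • θ x) - u 0 x) / ρ - udot x)|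
          + |(D ρ x - 1) * udot x|
          + |u 0 x * ((D ρ x - 1 - Matrix.trace (Mx x) * ρ) / ρ)| := abs_add_three _ _ _
      _ ≤ 2 * εs + M1 * (B * |ρ|) + 2 * (B + 1) * |ρ| * |udot x| := by linarith
  -- integral estimate
  have hle1 : |(∫ x in Ω, (D ρ x * u ρ (x + ρ • θ x) - u 0 x) / ρ)
      - ∫ x in Ω, (udot x + u 0 x * Matrix.trace (Mx x))|
      ≤ ∫ x in Ω, (2 * εs + M1 * (B * |ρ|) + 2 * (B + 1) * |ρ| * |udot x|) := by
    rw [← integral_sub hqint hwint]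
    refine le_trans ?_ (setIntegral_mono_on hqw.abs hbint hΩm hpt)
    simpa [Real.norm_eq_abs] using
      norm_integral_le_integral_norm (μ := volume.restrict Ω)
        (fun x => (D ρ x * u ρ (x + ρ • θ x) - u 0 x) / ρ
          - (udot x + u 0 x * Matrix.trace (Mx x)))
  have hle2 : (∫ x in Ω, (2 * εs + M1 * (B * |ρ|) + 2 * (B + 1) * |ρ| * |udot x|))
      = (2 * εs + M1 * (B * |ρ|)) * μΩ + 2 * (B + 1) * |ρ| * U := by
    rw [integral_add (integrableOn_const (C := 2 * εs + M1 * (B * |ρ|)) hμ.ne) (hudotint.abs.const_mul _),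
      setIntegral_const, integral_const_mul, smul_eq_mul, measureReal_def, hU]
    ring
  have harith : (2 * εs + M1 * (B * |ρ|)) * μΩ + 2 * (B + 1) * |ρ| * U < ε := by
    have h4 : εs * (4 * (μΩ + 1)) = ε := by
      rw [hεs]; field_simp
    have h5 : |ρ| * (2 * (Z + 1)) < ε := by
      rw [lt_div_iff₀ (by positivity)] at hρZ
      exact hρZ
    have h6 : (2 * εs + M1 * (B * |ρ|)) * μΩ + 2 * (B + 1) * |ρ| * U
        = 2 * εs * μΩ + |ρ| * Z := by rw [hZ]; ring
    rw [h6]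
    nlinarith [abs_nonneg ρ, hεspos, hμΩnn, hZnn]
  exact lt_of_le_of_lt (hle1.trans (le_of_eq hle2)) harith
end

section
/- Let F : ℝ^n × ℝ^m → ℝ^n satisfy the hypotheses of the adjoint method (F C², ∂F/∂u invertible along the solution path, u(m) C¹), and j : ℝ^n → ℝ C². Then the Hessian-vector product of the reduced functional ĵ(m) = j(u(m)) in direction δm equals the derivative in direction δm of the map m ↦ −(∂F/∂m(u(m),m))ᵀ λ(m), where λ(m) solves (∂F/∂u(u(m),m))ᵀ λ(m) = ∇j(u(m)); i.e., forward-over-reverse differentiation yields ∇²ĵ(m) δm. -/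
/-!
Differentiating the state equation `F (u p, p) = 0` gives
`∂F/∂u · u'(p) w = -∂F/∂m · w`, so pairing with the adjoint state turns the
chain rule `ĵ'(p) w = j'(u p) (u'(p) w) = λ(p) ⬝ᵥ ∂F/∂u · u'(p) w` into
`ĵ'(p) w = -(λ(p) ⬝ᵥ ∂F/∂m · w)` for every `p`. Hence the gradient of `ĵ` *is* the
adjoint-based gradient map as a function of `p`, and differentiating both in direction `δm`
gives the claim.
-/

open Filter Topology

section AdjointGradient

variable {𝕜 : Type*} [NontriviallyNormedField 𝕜]
  {E P V : Type*} [NormedAddCommGroup E] [NormedSpace 𝕜 E]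
  [NormedAddCommGroup P] [NormedSpace 𝕜 P] [NormedAddCommGroup V] [NormedSpace 𝕜 V]

theorem DifferentiableAt.dotProduct {ι : Type*} [Fintype ι] {f g : P → ι → 𝕜} {x : P}
    (hf : DifferentiableAt 𝕜 f x) (hg : DifferentiableAt 𝕜 g x) :
    DifferentiableAt 𝕜 (fun y => f y ⬝ᵥ g y) x := by
  simp only [_root_.dotProduct]
  exact DifferentiableAt.fun_sum fun i _ =>
    (differentiableAt_pi.1 hf i).mul (differentiableAt_pi.1 hg i)

theorem fderiv_apply_state_eq_neg_fderiv_apply_param {F : E × P → V} {u : P → E} {p : P}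
    (hF : DifferentiableAt 𝕜 F (u p, p)) (hu : DifferentiableAt 𝕜 u p)
    (hsol : ∀ᶠ q in 𝓝 p, F (u q, q) = 0) (w : P) :
    fderiv 𝕜 F (u p, p) (fderiv 𝕜 u p w, 0) = -fderiv 𝕜 F (u p, p) (0, w) := by
  have hchain : HasFDerivAt (fun q => F (u q, q))
      ((fderiv 𝕜 F (u p, p)).comp ((fderiv 𝕜 u p).prod (.id 𝕜 P))) p :=
    hF.hasFDerivAt.comp (f := fun q => (u q, q)) p (hu.hasFDerivAt.prodMk (hasFDerivAt_id p))
  have hzero : HasFDerivAt (fun q => F (u q, q)) (0 : P →L[𝕜] V) p :=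
    (hasFDerivAt_const 0 p).congr_of_eventuallyEq hsol
  rw [eq_neg_iff_add_eq_zero, ← map_add]
  simpa using congrArg (· w) (hchain.unique hzero)

theorem fderiv_reduced_eq_neg_adjoint_pairing {ι : Type*} [Fintype ι]
    {F : E × P → ι → 𝕜} {u : P → E} {j : E → 𝕜} {lam : P → ι → 𝕜} {p : P}
    (hF : DifferentiableAt 𝕜 F (u p, p)) (hu : DifferentiableAt 𝕜 u p)
    (hj : DifferentiableAt 𝕜 j (u p)) (hsol : ∀ᶠ q in 𝓝 p, F (u q, q) = 0)
    (hadj : ∀ v : E, lam p ⬝ᵥ fderiv 𝕜 F (u p, p) (v, 0) = fderiv 𝕜 j (u p) v) (w : P) :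
    fderiv 𝕜 (fun q => j (u q)) p w = -(lam p ⬝ᵥ fderiv 𝕜 F (u p, p) (0, w)) := by
  rw [show (fun q => j (u q)) = j ∘ u from rfl, fderiv_comp p hj hu,
    ContinuousLinearMap.comp_apply, ← hadj,
    fderiv_apply_state_eq_neg_fderiv_apply_param hF hu hsol, dotProduct_neg]

theorem differentiableAt_neg_adjoint_pairing {ι : Type*} [Fintype ι]
    {F : E × P → ι → 𝕜} {u : P → E} {lam : P → ι → 𝕜} {p : P}
    (hDF : DifferentiableAt 𝕜 (fderiv 𝕜 F) (u p, p)) (hu : DifferentiableAt 𝕜 u p)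
    (hlam : DifferentiableAt 𝕜 lam p) (w : P) :
    DifferentiableAt 𝕜 (fun q => -(lam q ⬝ᵥ fderiv 𝕜 F (u q, q) (0, w))) p :=
  (hlam.dotProduct <|
    (hDF.comp (f := fun q => (u q, q)) p (hu.prodMk differentiableAt_id)).clm_apply
      (differentiableAt_const _)).neg

end AdjointGradient

theorem forward_over_reverse_hessian_general
    (n m : ℕ) (F : (Fin n → ℝ) × (Fin m → ℝ) → (Fin n → ℝ))
    (hF : ContDiff ℝ 2 F)
    (u : (Fin m → ℝ) → (Fin n → ℝ)) (hu : ContDiff ℝ 1 u)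
    (hsol : ∀ p : Fin m → ℝ, F (u p, p) = 0)
    (j : (Fin n → ℝ) → ℝ) (hj : ContDiff ℝ 2 j)
    (lam : (Fin m → ℝ) → (Fin n → ℝ)) (hlam : Differentiable ℝ lam)
    (hadj : ∀ (p : Fin m → ℝ) (v : Fin n → ℝ),
      lam p ⬝ᵥ fderiv ℝ F (u p, p) (v, 0) = fderiv ℝ j (u p) v)
    (m0 δm : Fin m → ℝ) :
    ∀ a : Fin m,
      fderiv ℝ (fun p' => fderiv ℝ (fun p => j (u p)) p' (Pi.single a 1)) m0 δm =
        fderiv ℝ (fun p => fun b : Fin m =>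
          -(lam p ⬝ᵥ fderiv ℝ F (u p, p) (0, Pi.single b 1))) m0 δm a := by
  intro a
  have hud : Differentiable ℝ u := hu.differentiable one_ne_zero
  have hDF : Differentiable ℝ (fderiv ℝ F) :=
    (hF.fderiv_right (m := 1) le_rfl).differentiable one_ne_zero
  have hgrad : ∀ p w, fderiv ℝ (fun q => j (u q)) p w =
      -(lam p ⬝ᵥ fderiv ℝ F (u p, p) (0, w)) := fun p =>
    fderiv_reduced_eq_neg_adjoint_pairing (hF.differentiable two_ne_zero _) (hud p)
      (hj.differentiable two_ne_zero _) (.of_forall hsol) (hadj p)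
  simp only [hgrad]
  rw [fderiv_pi fun b => differentiableAt_neg_adjoint_pairing (hDF _) (hud m0) (hlam m0) _]
  rfl

/-- Forward-over-reverse second derivatives: the Hessian-vector product of the reduced
functional `ĵ(m) = j(u(m))` in direction `δm` equals the directional derivative of the
adjoint-based gradient map `m ↦ −(∂F/∂m(u(m),m))ᵀ λ(m)`, where `λ(m)` solves the adjoint
equation `(∂F/∂u(u(m),m))ᵀ λ(m) = ∇j(u(m))`. -/
theorem forward_over_reverse_hessian
    (n m : ℕ) (F : (Fin n → ℝ) × (Fin m → ℝ) → (Fin n → ℝ))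
    (hF : ContDiff ℝ 2 F)
    (u : (Fin m → ℝ) → (Fin n → ℝ)) (hu : ContDiff ℝ 1 u)
    (hsol : ∀ p : Fin m → ℝ, F (u p, p) = 0)
    (hinv : ∀ p : Fin m → ℝ,
      Function.Bijective (fun v : Fin n → ℝ => fderiv ℝ F (u p, p) (v, 0)))
    (j : (Fin n → ℝ) → ℝ) (hj : ContDiff ℝ 2 j)
    (lam : (Fin m → ℝ) → (Fin n → ℝ)) (hlam : Differentiable ℝ lam)
    (hadj : ∀ (p : Fin m → ℝ) (v : Fin n → ℝ),
      lam p ⬝ᵥ fderiv ℝ F (u p, p) (v, 0) = fderiv ℝ j (u p) v)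
    (m0 δm : Fin m → ℝ) :
    ∀ a : Fin m,
      fderiv ℝ (fun p' => fderiv ℝ (fun p => j (u p)) p' (Pi.single a 1)) m0 δm =
        fderiv ℝ (fun p => fun b : Fin m =>
          -(lam p ⬝ᵥ fderiv ℝ F (u p, p) (0, Pi.single b 1))) m0 δm a :=
  forward_over_reverse_hessian_general n m F hF u hu hsol j hj lam hlam hadj m0 δm
end
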